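/- arXiv:1506.08112 — 7 statements merged into one kernel-verified Lean document; each statement's English description precedes it below -/
import Mathlib

section
/- For all natural numbers m, n, q, the following identity among Bernoulli numbers holds: (-1)^m · Σ_{k=0}^{m+q} C(m+q, k) · C(n+q+k, q) · B_{n+k} − (-1)^{n+q} · Σ_{k=0}^{n+q} C(n+q, k) · C(m+q+k, q) · B_{m+k} = 0, where C(a, b) denotes the binomial coefficient. -/
/-!
Expand each `B_{n+k}` by the reflection `B_N = (-1)^N ∑_j C(N, j) B_j` (that is,
`B_N(1) = (-1)^N B_N`) and exchange the sums. Since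
`C(n+q+k, q) C(n+k, j) = C(n+q+k, j+q) C(j+q, q)`, the coefficient of `B_j` is `C(j+q, q)` times
an alternating sum which is, up to sign, the `(m+q)`-th forward difference of `x ↦ C(x, j+q)` at
`n+q`, namely `C(n+q, j-m)`, and `0` when `j < m`. Writing `j = m + i` gives the other side.
-/

open Finset fwdDiff

lemma fwdDiff_iter_choose_eq_zero_of_lt {b M : ℕ} (h : b < M) :
    (Δ_[1])^[M] (fun x ↦ x.choose b : ℕ → ℤ) = 0 := by
  obtain ⟨r, rfl⟩ := Nat.exists_eq_add_of_lt h
  have hconst := fwdDiff_iter_choose 0 b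
  rw [add_zero] at hconst
  rw [show b + r + 1 = r + 1 + b by ring, Function.iterate_add_apply, hconst]
  simp only [Nat.choose_zero_right, Nat.cast_one, Function.iterate_succ_apply, fwdDiff_const]
  ext x
  simp [fwdDiff_iter_eq_sum_shift]

lemma sum_neg_one_pow_mul_choose_mul_choose_add (M a b : ℕ) :
    ∑ k ∈ range (M + 1), (-1 : ℤ) ^ k * M.choose k * (a + k).choose b =
      if M ≤ b then (-1 : ℤ) ^ M * a.choose (b - M) else 0 := by
  have hdiff := fwdDiff_iter_eq_sum_shift (1 : ℕ) (fun x ↦ x.choose b : ℕ → ℤ) M a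
  have hsum : ∑ k ∈ range (M + 1), (-1 : ℤ) ^ k * M.choose k * (a + k).choose b =
      (-1) ^ M * (Δ_[1])^[M] (fun x ↦ x.choose b : ℕ → ℤ) a := by
    rw [hdiff, mul_sum]
    refine sum_congr rfl fun k hk => ?_
    rw [smul_eq_mul, smul_eq_mul, mul_one, ← mul_assoc, ← mul_assoc, ← pow_add,
      show M + (M - k) = k + 2 * (M - k) by grind, pow_add, pow_mul, neg_one_sq, one_pow, mul_one]
  split_ifs with h
  · obtain ⟨c, rfl⟩ := Nat.exists_eq_add_of_le h
    rw [hsum, fwdDiff_iter_choose, Nat.add_sub_cancel_left]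
  · rw [hsum, fwdDiff_iter_choose_eq_zero_of_lt (by omega), Pi.zero_apply, mul_zero]

lemma add_choose_mul_choose (a q j : ℕ) :
    (a + q).choose q * a.choose j = (a + q).choose (j + q) * (j + q).choose q := by
  rw [Nat.choose_mul (Nat.le_add_left q j), Nat.add_sub_cancel, Nat.add_sub_cancel]

lemma bernoulli_eq_neg_one_pow_mul_sum {N L : ℕ} (h : N ≤ L) :
    bernoulli N = (-1) ^ N * ∑ j ∈ range (L + 1), (N.choose j : ℚ) * bernoulli j := by
  have hL : ∑ j ∈ range (L + 1), (N.choose j : ℚ) * bernoulli j =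
      ∑ j ∈ range (N + 1), (N.choose j : ℚ) * bernoulli j := by
    refine (sum_subset (range_subset_range.2 (by omega)) fun j _ hj => ?_).symm
    rw [Nat.choose_eq_zero_of_lt (by simpa using hj), Nat.cast_zero, zero_mul]
  have heval : ∑ j ∈ range (N + 1), (N.choose j : ℚ) * bernoulli j = bernoulli' N := by
    rw [← Polynomial.bernoulli_eval_one, Polynomial.bernoulli, Polynomial.eval_finsetSum]
    simp [mul_comm]
  rw [hL, heval, bernoulli'_eq_bernoulli, ← mul_assoc, ← pow_add, ← two_mul, pow_mul, neg_one_sq,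
    one_pow, one_mul]

lemma sum_neg_one_pow_mul_choose_mul_choose_mul_choose (m n q j : ℕ) :
    ∑ k ∈ range (m + q + 1), (-1 : ℚ) ^ k * (m + q).choose k * (n + q + k).choose q *
        (n + k).choose j =
      if m ≤ j then (-1 : ℚ) ^ (m + q) * (n + q).choose (j - m) * (j + q).choose q else 0 := by
  have hterm : ∀ k, (-1 : ℚ) ^ k * (m + q).choose k * (n + q + k).choose q * (n + k).choose j =
      (j + q).choose q * ((-1 : ℤ) ^ k * (m + q).choose k * (n + q + k).choose (j + q) : ℤ) := by
    intro k
    have h := add_choose_mul_choose (n + k) q j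
    rw [show n + k + q = n + q + k by ring] at h
    push_cast
    rw [mul_assoc _ _ ((n + k).choose j : ℚ), ← Nat.cast_mul, h]
    push_cast
    ring
  rw [sum_congr rfl fun k _ => hterm k, ← mul_sum, ← Int.cast_sum,
    sum_neg_one_pow_mul_choose_mul_choose_add]
  simp only [Nat.add_le_add_iff_right, Nat.add_sub_add_right]
  split_ifs <;> push_cast <;> ring

lemma sum_choose_mul_choose_mul_bernoulli (m n q : ℕ) :
    ∑ k ∈ range (m + q + 1), ((m + q).choose k : ℚ) * (n + q + k).choose q * bernoulli (n + k) =
      (-1) ^ (m + n + q) * ∑ i ∈ range (n + q + 1),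
        ((n + q).choose i : ℚ) * (m + q + i).choose q * bernoulli (m + i) := by
  calc ∑ k ∈ range (m + q + 1), ((m + q).choose k : ℚ) * (n + q + k).choose q * bernoulli (n + k)
      = ∑ k ∈ range (m + q + 1), ∑ j ∈ range (m + (n + q + 1)), (-1) ^ n * bernoulli j *
          ((-1 : ℚ) ^ k * (m + q).choose k * (n + q + k).choose q * (n + k).choose j) := by
        refine sum_congr rfl fun k hk => ?_
        rw [bernoulli_eq_neg_one_pow_mul_sum (L := m + (n + q)) (by simp at hk; omega), mul_sum,
          mul_sum]
        refine sum_congr rfl fun j _ => ?_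
        ring
    _ = ∑ j ∈ range (m + (n + q + 1)), (-1) ^ n * bernoulli j *
          if m ≤ j then (-1 : ℚ) ^ (m + q) * (n + q).choose (j - m) * (j + q).choose q else 0 := by
        rw [sum_comm]
        simp only [← mul_sum, sum_neg_one_pow_mul_choose_mul_choose_mul_choose]
    _ = (-1) ^ (m + n + q) * ∑ i ∈ range (n + q + 1),
          ((n + q).choose i : ℚ) * (m + q + i).choose q * bernoulli (m + i) := by
        rw [sum_range_add, sum_eq_zero fun j hj => by simp [show ¬ m ≤ j by simpa using hj],
          zero_add, mul_sum]
        refine sum_congr rfl fun i _ => ?_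
        simp only [le_add_iff_nonneg_right, zero_le, if_true]
        rw [Nat.add_sub_cancel_left, show m + i + q = m + q + i by ring]
        ring

theorem bernoulli_identity_general (m n q : ℕ) :
    (-1 : ℚ) ^ m *
        ∑ k ∈ Finset.range (m + q + 1),
          ((m + q).choose k : ℚ) * ((n + q + k).choose q : ℚ) * bernoulli (n + k) -
      (-1 : ℚ) ^ (n + q) *
        ∑ k ∈ Finset.range (n + q + 1),
          ((n + q).choose k : ℚ) * ((m + q + k).choose q : ℚ) * bernoulli (m + k) = 0 := by
  rw [sum_choose_mul_choose_mul_bernoulli, sub_eq_zero, ← mul_assoc, ← pow_add,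
    show m + (m + n + q) = 2 * m + (n + q) by ring, pow_add, pow_mul, neg_one_sq, one_pow, one_mul]
end

section
/- For all natural numbers m and n, the following identity among Bernoulli numbers holds: (-1)^m · Σ_{k=0}^{m} C(m, k) · B_{n+k} = (-1)^n · Σ_{k=0}^{n} C(n, k) · B_{m+k}, where C(a, b) denotes the binomial coefficient (Carlitz's identity). -/
open Finset

private def S (m n : ℕ) : ℚ := ∑ k ∈ range (m + 1), (m.choose k : ℚ) * bernoulli (n + k)

private lemma S_base (m : ℕ) : S m 0 = (-1 : ℚ) ^ m * bernoulli m := by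
  have h := sum_bernoulli m
  have : S m 0 = (∑ k ∈ range m, (m.choose k : ℚ) * bernoulli k) + bernoulli m := by
    simp [S, Finset.sum_range_succ]
  rw [this, h]
  rcases Nat.even_or_odd m with he | ho
  · have hm1 : m ≠ 1 := by rintro rfl; simp at he
    simp [hm1, he.neg_one_pow]
  · rcases eq_or_ne m 1 with rfl | hm1
    · norm_num [bernoulli_one]
    · have : bernoulli m = 0 := by
        rw [bernoulli_eq_bernoulli'_of_ne_one hm1]
        exact bernoulli'_eq_zero_of_odd ho (by rcases ho with ⟨t, ht⟩; omega)
      simp [hm1, this]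

private lemma S_rec (m n : ℕ) : S (m + 1) n = S m n + S m (n + 1) := by
  have h1 : S (m+1) n =
      (∑ k ∈ range (m+1), ((m+1).choose (k+1) : ℚ) * bernoulli (n + (k+1))) + bernoulli n := by
    simp [S, Finset.sum_range_succ' _ (m+1)]
  have h2 : ∀ k, ((m+1).choose (k+1) : ℚ) = (m.choose k : ℚ) + (m.choose (k+1) : ℚ) := by
    intro k; rw [Nat.choose_succ_succ]; push_cast; ring
  have h3 : S m n = (∑ k ∈ range m, (m.choose (k+1) : ℚ) * bernoulli (n + (k+1))) + bernoulli n := by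
    simp [S, Finset.sum_range_succ' _ m]
  rw [h1]
  have h4 : ∑ k ∈ range (m+1), ((m+1).choose (k+1) : ℚ) * bernoulli (n + (k+1))
      = (∑ k ∈ range (m+1), (m.choose k : ℚ) * bernoulli (n + (k+1)))
        + ∑ k ∈ range (m+1), (m.choose (k+1) : ℚ) * bernoulli (n + (k+1)) := by
    rw [← Finset.sum_add_distrib]
    exact Finset.sum_congr rfl fun k _ => by rw [h2]; ring
  rw [h4]
  have h5 : ∑ k ∈ range (m+1), (m.choose k : ℚ) * bernoulli (n + (k+1)) = S m (n+1) := by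
    apply Finset.sum_congr rfl; intro k _; rw [show n + (k+1) = n + 1 + k from by omega]
  have h6 : ∑ k ∈ range (m+1), (m.choose (k+1) : ℚ) * bernoulli (n + (k+1))
      = ∑ k ∈ range m, (m.choose (k+1) : ℚ) * bernoulli (n + (k+1)) := by
    rw [Finset.sum_range_succ]; simp
  rw [h5, h6]; rw [h3]; ring

private def F (m n : ℕ) : ℚ := (-1 : ℚ) ^ m * S m n

private lemma F_rec (m n : ℕ) : F m (n + 1) = -F m n - F (m + 1) n := by
  have := S_rec m n
  simp only [F, pow_succ]
  rw [this]; ring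

private lemma F_symm (m n : ℕ) : F m n = F n m := by
  induction n generalizing m with
  | zero =>
    show (-1 : ℚ) ^ m * S m 0 = (-1 : ℚ) ^ 0 * S 0 m
    rw [S_base, ← mul_assoc, ← mul_pow]
    simp [S]
  | succ n ih =>
    have h := F_rec n m
    rw [F_rec m n, ih m, ih (m + 1)]
    linarith

theorem carlitz_identity (m n : ℕ) :
    (-1 : ℚ) ^ m * ∑ k ∈ Finset.range (m + 1), (m.choose k : ℚ) * bernoulli (n + k) =
      (-1 : ℚ) ^ n * ∑ k ∈ Finset.range (n + 1), (n.choose k : ℚ) * bernoulli (m + k) := by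
  exact F_symm m n
end

section
/- Let L : ℚ[x] → ℚ be the ℚ-linear map determined by L(x^n) = B_n for every natural number n. If Q ∈ ℚ[x] is a polynomial satisfying Q(−1 − x) = −Q(x) (that is, Q is odd as a polynomial in x + 1/2), then L(Q) = 0; equivalently, Σ_n (coefficient of x^n in Q) · B_n = 0. -/
open Finset

theorem linear_map_bernoulli_vanishes_on_odd
    (L : Polynomial ℚ →ₗ[ℚ] ℚ) (hL : ∀ n : ℕ, L (Polynomial.X ^ n) = bernoulli n)
    (Q : Polynomial ℚ) (hQ : Q.comp (-1 - Polynomial.X) = -Q) :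
    L Q = 0 ∧ ∑ n ∈ Finset.range (Q.natDegree + 1), Q.coeff n * bernoulli n = 0 := by
  have hmul : ∀ (a : ℚ) (p : Polynomial ℚ), L (Polynomial.C a * p) = a * L p := by
    intro a p
    rw [← Polynomial.smul_eq_C_mul, map_smul, smul_eq_mul]
  have hber : ∀ n : ℕ, (-1 : ℚ) ^ n * ((if n = 1 then (1:ℚ) else 0) + bernoulli n)
      = bernoulli n := by
    intro n
    by_cases h1 : n = 1
    · subst h1; norm_num
    · rcases Nat.even_or_odd n with he | ho
      · simp [h1, he.neg_one_pow]
      · have hz : bernoulli n = 0 := by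
          rw [bernoulli_eq_bernoulli'_of_ne_one h1]
          exact bernoulli'_eq_zero_of_odd ho
            (Nat.one_lt_iff_ne_zero_and_ne_one.mpr ⟨ho.pos.ne', h1⟩)
        simp [h1, hz]
  have hone : ∀ n : ℕ, L ((1 + Polynomial.X : Polynomial ℚ) ^ n)
      = (if n = 1 then (1:ℚ) else 0) + bernoulli n := by
    intro n
    have hexp : ((1 + Polynomial.X : Polynomial ℚ)) ^ n
        = ∑ k ∈ range (n + 1), Polynomial.C ((n.choose k : ℚ)) * Polynomial.X ^ k := by
      rw [add_comm, add_pow]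
      refine Finset.sum_congr rfl fun k _ => ?_
      rw [Polynomial.C_eq_natCast]
      push_cast
      ring
    rw [hexp, map_sum]
    simp_rw [hmul, hL]
    rw [Finset.sum_range_succ, Nat.choose_self, sum_bernoulli]
    push_cast
    ring
  have hpow : ∀ n : ℕ, L ((-1 - Polynomial.X : Polynomial ℚ) ^ n) = bernoulli n := by
    intro n
    have key : ((-1 - Polynomial.X : Polynomial ℚ)) ^ n
        = Polynomial.C ((-1 : ℚ) ^ n) * (1 + Polynomial.X) ^ n := by
      rw [map_pow, Polynomial.C_neg, Polynomial.C_1, ← mul_pow]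
      congr 1
      ring
    rw [key, hmul, hone, hber]
  have hcomp : ∀ P : Polynomial ℚ, L (P.comp (-1 - Polynomial.X)) = L P := by
    intro P
    induction P using Polynomial.induction_on' with
    | add p q hp hq => rw [Polynomial.add_comp, map_add, map_add, hp, hq]
    | monomial n a =>
        rw [Polynomial.monomial_comp, hmul, hpow,
          ← Polynomial.C_mul_X_pow_eq_monomial, hmul, hL]
  have hLQ : L Q = 0 := by
    have := hcomp Q
    rw [hQ, map_neg] at this
    linarith
  refine ⟨hLQ, ?_⟩
  have hsum : Q = ∑ n ∈ range (Q.natDegree + 1),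
      Polynomial.C (Q.coeff n) * Polynomial.X ^ n := by
    conv_lhs => rw [Q.as_sum_range' (Q.natDegree + 1) (Nat.lt_succ_self _)]
    exact Finset.sum_congr rfl fun n _ => by rw [Polynomial.C_mul_X_pow_eq_monomial]
  calc ∑ n ∈ range (Q.natDegree + 1), Q.coeff n * bernoulli n
      = L Q := by
        conv_rhs => rw [hsum]
        rw [map_sum]
        exact Finset.sum_congr rfl fun n _ => by rw [hmul, hL]
    _ = 0 := hLQ
end

section
/- For natural numbers m, n, q, let P(x) = (−1)^{m+q} x^{n+q} (1 + x)^{m+q} − (−1)^n x^{m+q} (1 + x)^{n+q} as a polynomial over ℚ, and let P^{(q)} denote its q-th derivative. Then P^{(q)}(−1/2 + x) + P^{(q)}(−1/2 − x) = 0 (as an identity of polynomials in x); that is, P^{(q)} is an odd polynomial in x + 1/2. -/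
open Polynomial

lemma iter_deriv_comp_refl (Q : Polynomial ℚ) (c : ℚ) (q : ℕ) :
    derivative^[q] (Q.comp (C c - X)) = (-1) ^ q * (derivative^[q] Q).comp (C c - X) := by
  induction q generalizing Q with
  | zero => simp
  | succ k ih =>
    rw [Function.iterate_succ_apply, derivative_comp]
    simp only [derivative_sub, derivative_C, derivative_X, zero_sub, neg_one_mul]
    rw [Function.iterate_succ_apply]
    rw [iterate_derivative_neg, ih (derivative Q)]
    ring

theorem P_deriv_antisymmetry (m n q : ℕ)
    (P : Polynomial ℚ)
    (hP : P = (-1 : Polynomial ℚ) ^ (m + q) * Polynomial.X ^ (n + q) * (1 + Polynomial.X) ^ (m + q)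
        - (-1 : Polynomial ℚ) ^ n * Polynomial.X ^ (m + q) * (1 + Polynomial.X) ^ (n + q)) :
    (Polynomial.derivative^[q] P).comp (Polynomial.C (-1 / 2 : ℚ) + Polynomial.X) +
      (Polynomial.derivative^[q] P).comp (Polynomial.C (-1 / 2 : ℚ) - Polynomial.X) = 0 := by
  have key : P.comp (C (-1 : ℚ) - X) = (-1) ^ (q + 1) * P := by
    subst hP
    rw [show Polynomial.C (-1 : ℚ) = -1 by simp]
    simp only [sub_comp, mul_comp, pow_comp, neg_comp, one_comp, X_comp, add_comp]
    rw [show ((1 : ℚ[X]) + (-1 - X)) = -X by ring, show ((-1 : ℚ[X]) - X) = -(1 + X) by ring]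
    set Y : ℚ[X] := 1 + X with hY
    rcases Nat.even_or_odd m with hm | hm <;> rcases Nat.even_or_odd n with hn | hn <;>
      rcases Nat.even_or_odd q with hq | hq <;>
      simp [pow_add, neg_pow Y, neg_pow (X : ℚ[X]),
        hm.neg_one_pow, hn.neg_one_pow, hq.neg_one_pow] <;> ring
  set D := derivative^[q] P with hD
  have h := iter_deriv_comp_refl P (-1) q
  rw [key] at h
  rw [show ((-1 : ℚ[X]) ^ (q + 1)) = C ((-1 : ℚ) ^ (q + 1)) by simp,
    iterate_derivative_C_mul, show C ((-1 : ℚ) ^ (q + 1)) = ((-1 : ℚ[X]) ^ (q + 1)) by simp,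
    ← hD] at h
  -- h : (-1)^(q+1) * D = (-1)^q * D.comp (C (-1) - X)
  have key2 : D.comp (C (-1 : ℚ) - X) = -D := by
    have hc : ((-1 : ℚ[X]) ^ q) * (-1) ^ q = 1 := by
      rw [← pow_add, show q + q = 2 * q by ring, pow_mul]; simp
    calc D.comp (C (-1 : ℚ) - X) = ((-1) ^ q * (-1) ^ q) * D.comp (C (-1 : ℚ) - X) := by
          rw [hc, one_mul]
      _ = (-1) ^ q * ((-1) ^ q * D.comp (C (-1 : ℚ) - X)) := by ring
      _ = (-1) ^ q * ((-1) ^ (q + 1) * D) := by rw [← h]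
      _ = -D := by
          rw [← mul_assoc, ← pow_add, show q + (q + 1) = 2 * q + 1 by ring, pow_succ, pow_mul]
          simp
  have hcomp : (C (-1 : ℚ) - X).comp (C (-1 / 2 : ℚ) + X) = C (-1 / 2 : ℚ) - X := by
    simp only [sub_comp, C_comp, X_comp]
    rw [show (C (-1 : ℚ)) - (C (-1 / 2 : ℚ) + X) = (C (-1 : ℚ) - C (-1 / 2 : ℚ)) - X by ring,
      ← C_sub]
    norm_num
  have : D.comp (C (-1 / 2 : ℚ) - X) = (D.comp (C (-1 : ℚ) - X)).comp (C (-1 / 2 : ℚ) + X) := by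
    rw [comp_assoc, hcomp]
  rw [this, key2, neg_comp]
  ring
end

section
/- For every natural number n, the following identity among Bernoulli numbers holds: Σ_{k=0}^{n+1} C(n+1, k) · (n+k+1) · B_{n+k} = 0, where C(a, b) denotes the binomial coefficient (the Seidel–Kaneko identity). -/
/-!
Let `L` be the umbral functional `X ^ n ↦ B_n` on `ℚ[X]`. The identity `∑ⱼ C(k, j) B_j = (-1)^k B_k`,
i.e. `L ((X + 1) ^ k) = L ((-X) ^ k)`, says `L (p(-1 - X)) = L p`. The derivative of a polynomial invariant under `X ↦ -1 - X` is
anti-invariant, so `L` kills it. The sum in the theorem is `L` applied to the derivative of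
`(X (X + 1)) ^ (n + 1)`.
-/

open Polynomial hiding bernoulli
open Finset

noncomputable def bernoulliUmbra : ℚ[X] →ₗ[ℚ] ℚ :=
  lsum fun n => LinearMap.mulRight ℚ (bernoulli n)

theorem bernoulliUmbra_C_mul_X_pow (n : ℕ) (a : ℚ) :
    bernoulliUmbra (C a * X ^ n) = a * bernoulli n := by
  simp [bernoulliUmbra, C_mul_X_pow_eq_monomial]

theorem bernoulliUmbra_C_mul (a : ℚ) (p : ℚ[X]) :
    bernoulliUmbra (C a * p) = a * bernoulliUmbra p := by
  rw [← smul_eq_C_mul, map_smul, smul_eq_mul]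

theorem X_pow_mul_X_add_one_pow {R : Type*} [CommSemiring R] (m n : ℕ) :
    (X : R[X]) ^ m * (X + 1) ^ n = ∑ k ∈ range (n + 1), C (n.choose k : R) * X ^ (m + k) := by
  rw [add_pow, mul_sum]
  refine sum_congr rfl fun k _ => ?_
  rw [one_pow, mul_one, pow_add, ← C_eq_natCast]
  ring

theorem X_pow_mul_X_add_one_pow_comp_neg_one_sub_X {R : Type*} [CommRing R] (m : ℕ) :
    ((X : R[X]) ^ m * (X + 1) ^ m).comp (-1 - X) = X ^ m * (X + 1) ^ m := by
  simp only [mul_comp, pow_comp, X_comp, add_comp, one_comp, ← mul_pow]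
  ring

theorem bernoulliUmbra_X_add_one_pow (n : ℕ) : bernoulliUmbra ((X + 1) ^ n) = bernoulli' n := by
  have hexpand := X_pow_mul_X_add_one_pow (R := ℚ) 0 n
  rw [pow_zero, one_mul] at hexpand
  rw [hexpand, map_sum, ← Polynomial.bernoulli_eval_one, Polynomial.bernoulli, eval_finsetSum]
  refine sum_congr rfl fun k _ => ?_
  rw [zero_add, bernoulliUmbra_C_mul_X_pow, eval_monomial, one_pow, mul_one, mul_comm]

theorem bernoulliUmbra_comp_neg_one_sub_X (p : ℚ[X]) :
    bernoulliUmbra (p.comp (-1 - X)) = bernoulliUmbra p := by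
  induction p using Polynomial.induction_on' with
  | add p q hp hq => rw [add_comp, map_add, map_add, hp, hq]
  | monomial n a =>
    rw [← C_mul_X_pow_eq_monomial, mul_comp, C_comp, X_pow_comp,
      show (-1 - X : ℚ[X]) = C (-1) * (X + 1) by simp; ring, mul_pow, ← C_pow, ← mul_assoc, ← C_mul,
      bernoulliUmbra_C_mul, bernoulliUmbra_X_add_one_pow, bernoulliUmbra_C_mul_X_pow, bernoulli,
      mul_assoc]

theorem bernoulliUmbra_derivative_eq_zero_of_comp_eq {p : ℚ[X]} (hp : p.comp (-1 - X) = p) :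
    bernoulliUmbra (derivative p) = 0 := by
  have hanti : (derivative p).comp (-1 - X) = -derivative p := by
    conv_rhs => rw [← hp]
    simp [derivative_comp]
  have h := bernoulliUmbra_comp_neg_one_sub_X (derivative p)
  rw [hanti, map_neg] at h
  linarith

theorem seidel_kaneko_identity (n : ℕ) :
    ∑ k ∈ Finset.range (n + 2), ((n + 1).choose k : ℚ) * (n + k + 1 : ℚ) * bernoulli (n + k) = 0 := by
  rw [← bernoulliUmbra_derivative_eq_zero_of_comp_eq
      (X_pow_mul_X_add_one_pow_comp_neg_one_sub_X (n + 1)),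
    X_pow_mul_X_add_one_pow, derivative_sum, map_sum]
  refine sum_congr rfl fun k _ => ?_
  rw [derivative_C_mul_X_pow, bernoulliUmbra_C_mul_X_pow, show n + 1 + k - 1 = n + k by omega]
  push_cast
  ring
end

section
/- For all natural numbers m and n, the following identity among Bernoulli numbers holds: (-1)^m · Σ_{k=0}^{m+1} C(m+1, k) · (n+k+1) · B_{n+k} + (-1)^n · Σ_{k=0}^{n+1} C(n+1, k) · (m+k+1) · B_{m+k} = 0, where C(a, b) denotes the binomial coefficient (Momiyama's identity, obtained from the main identity at q = 1). -/
open Finset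

private def A (m n : ℕ) : ℚ := ∑ k ∈ range (m+1), (m.choose k : ℚ) * bernoulli (n+k)

private lemma L1 (N : ℕ) :
    ∑ j ∈ range (N+1), (N.choose j : ℚ) * bernoulli j = (-1)^N * bernoulli N := by
  rw [Finset.sum_range_succ, sum_bernoulli]
  rcases eq_or_ne N 1 with h | h
  · subst h; norm_num [bernoulli_one]
  · rcases Nat.even_or_odd N with he | ho
    · simp [h, he.neg_one_pow]
    · rcases eq_or_ne N 1 with h1 | h1
      · exact absurd h1 h
      · have hz : bernoulli N = 0 := by
          rw [bernoulli, bernoulli'_eq_zero_of_odd ho (by rcases ho with ⟨t, ht⟩; omega), mul_zero]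
        simp [h, hz]

private lemma A_zero (n : ℕ) : A 0 n = bernoulli n := by simp [A]

private lemma A_rec (m n : ℕ) : A (m+1) n = A m n + A m (n+1) := by
  unfold A
  rw [Finset.sum_range_succ' (fun k => ((m+1).choose k : ℚ) * bernoulli (n+k))]
  have h1 : ∀ k, ((m+1).choose (k+1) : ℚ) = m.choose k + m.choose (k+1) := by
    intro k; rw [Nat.choose_succ_succ]; push_cast; ring
  have h2 : (∑ k ∈ range (m+1), ((m+1).choose (k+1) : ℚ) * bernoulli (n+(k+1)))
      = (∑ k ∈ range (m+1), (m.choose k : ℚ) * bernoulli ((n+1)+k))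
        + ∑ k ∈ range (m+1), (m.choose (k+1) : ℚ) * bernoulli (n+(k+1)) := by
    rw [← Finset.sum_add_distrib]
    apply Finset.sum_congr rfl
    intro k _
    rw [h1]
    have : n + 1 + k = n + (k+1) := by omega
    rw [this]; ring
  rw [h2]
  have h3 : ∑ k ∈ range (m+1), (m.choose (k+1) : ℚ) * bernoulli (n+(k+1))
      = ∑ k ∈ range m, (m.choose (k+1) : ℚ) * bernoulli (n+(k+1)) := by
    rw [Finset.sum_range_succ, Nat.choose_succ_self]; simp
  rw [h3]
  have h4 : ∑ k ∈ range (m+1), (m.choose k : ℚ) * bernoulli (n+k)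
      = (∑ k ∈ range m, (m.choose (k+1) : ℚ) * bernoulli (n+(k+1))) + (m.choose 0 : ℚ) * bernoulli (n+0) := by
    rw [Finset.sum_range_succ' (fun k => (m.choose k : ℚ) * bernoulli (n+k))]
  rw [h4]
  simp
  ring

private lemma carlitz : ∀ m n : ℕ, A m n = (-1)^(m+n) * A n m := by
  intro m
  induction m with
  | zero =>
    intro n
    rw [A_zero]
    have : A n 0 = ∑ j ∈ range (n+1), (n.choose j : ℚ) * bernoulli j := by
      unfold A; apply Finset.sum_congr rfl; intro k _; rw [Nat.zero_add]
    rw [this, L1, ← mul_assoc, ← pow_add, Nat.zero_add]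
    have : (-1 : ℚ)^(n+n) = 1 := by
      rw [← two_mul, pow_mul]; norm_num
    rw [this, one_mul]
  | succ m ih =>
    intro n
    rw [A_rec, ih n, ih (n+1), A_rec n m]
    have e1 : (-1 : ℚ)^(m+(n+1)) = -(-1 : ℚ)^(m+n) := by
      rw [show m+(n+1) = (m+n)+1 by omega, pow_succ]; ring
    have e2 : (-1 : ℚ)^(m+1+n) = -(-1 : ℚ)^(m+n) := by
      rw [show m+1+n = (m+n)+1 by omega, pow_succ]; ring
    rw [e1, e2]
    ring

private lemma S_decomp (m n : ℕ) :
    ∑ k ∈ range (m+2), ((m+1).choose k : ℚ) * (n + k + 1 : ℚ) * bernoulli (n+k)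
      = (n+1) * A (m+1) n + (m+1) * A m (n+1) := by
  have split : ∀ k, ((m+1).choose k : ℚ) * (n + k + 1 : ℚ) * bernoulli (n+k)
      = (n+1) * (((m+1).choose k : ℚ) * bernoulli (n+k))
        + (k : ℚ) * ((m+1).choose k : ℚ) * bernoulli (n+k) := by
    intro k; ring
  rw [Finset.sum_congr rfl (fun k _ => split k), Finset.sum_add_distrib, ← Finset.mul_sum]
  unfold A
  congr 1
  rw [Finset.sum_range_succ' (fun k => (k : ℚ) * ((m+1).choose k : ℚ) * bernoulli (n+k))]
  have key : ∀ k : ℕ, ((k:ℚ)+1) * ((m+1).choose (k+1) : ℚ) = ((m:ℚ)+1) * (m.choose k : ℚ) := by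
    intro k
    have h := Nat.add_one_mul_choose_eq m k
    have h' : ((m+1) * m.choose k : ℕ) = ((m+1).choose (k+1) * (k+1) : ℕ) := h
    have h2 := congrArg (fun x : ℕ => (x : ℚ)) h'
    push_cast at h2
    linarith
  simp only [Nat.cast_zero, zero_mul, add_zero, Nat.cast_add, Nat.cast_one]
  rw [Finset.mul_sum]
  apply Finset.sum_congr rfl
  intro k _
  have hk := key k
  have harg : n + (k+1) = n + 1 + k := by omega
  rw [harg]
  linear_combination bernoulli (n+1+k) * hk

theorem momiyama_identity (m n : ℕ) :
    (-1 : ℚ) ^ m *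
        ∑ k ∈ Finset.range (m + 2), ((m + 1).choose k : ℚ) * (n + k + 1 : ℚ) * bernoulli (n + k) +
      (-1 : ℚ) ^ n *
        ∑ k ∈ Finset.range (n + 2), ((n + 1).choose k : ℚ) * (m + k + 1 : ℚ) * bernoulli (m + k)
      = 0 := by
  rw [S_decomp m n, S_decomp n m]
  rw [carlitz (m+1) n, carlitz m (n+1)]
  have e1 : (-1 : ℚ)^(m+1+n) = (-1:ℚ)^m * (-1:ℚ)^n * (-1) := by
    rw [show m+1+n = m+n+1 by omega, pow_succ, pow_add]
  have e2 : (-1 : ℚ)^(m+(n+1)) = (-1:ℚ)^m * (-1:ℚ)^n * (-1) := by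
    rw [show m+(n+1) = m+n+1 by omega, pow_succ, pow_add]
  rw [e1, e2]
  have hm : (-1:ℚ)^m * (-1:ℚ)^m = 1 := by rw [← pow_add, ← two_mul, pow_mul]; norm_num
  linear_combination (-(-1:ℚ)^n * (((n:ℚ)+1) * A n (m+1) + ((m:ℚ)+1) * A (n+1) m)) * hm
end

section
/- For every natural number n and every odd natural number q, the following identity among Bernoulli numbers holds: Σ_{k=0}^{n+q} C(n+q, k) · C(n+q+k, q) · B_{n+k} = 0, where C(a, b) denotes the binomial coefficient (the Zekiri–Bencherif identity, obtained from the main identity at m = n with q odd). -/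
section Aux
open Polynomial Finset

/-- Linear functional sending `X^i ↦ Bᵢ`. -/
noncomputable def Lb : Polynomial ℚ →+ ℚ where
  toFun p := p.sum fun i a => a * _root_.bernoulli i
  map_zero' := Polynomial.sum_zero_index _
  map_add' p q := Polynomial.sum_add_index p q (fun i a => a * _root_.bernoulli i)
    (fun i => zero_mul _) (fun a b c => add_mul b c _)

lemma Lb_monomial (j : ℕ) (a : ℚ) : Lb (Polynomial.monomial j a) = a * _root_.bernoulli j := by
  change (Polynomial.monomial j a).sum (fun i b => b * _root_.bernoulli i) = _
  exact Polynomial.sum_monomial_index a _ (zero_mul _)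

lemma Lb_X_pow (j : ℕ) : Lb ((X : Polynomial ℚ) ^ j) = _root_.bernoulli j := by
  rw [X_pow_eq_monomial, Lb_monomial, one_mul]

lemma Lb_smul (a : ℚ) (p : Polynomial ℚ) : Lb (a • p) = a * Lb p := by
  change (a • p).sum (fun i b => b * _root_.bernoulli i)
    = a * p.sum (fun i b => b * _root_.bernoulli i)
  rw [Polynomial.sum_smul_index p a (fun i b => b * _root_.bernoulli i) (fun i => zero_mul _),
    Polynomial.sum_def,
    Polynomial.sum_def, Finset.mul_sum]
  exact Finset.sum_congr rfl fun i _ => by ring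

lemma key_bernoulli_sum (j : ℕ) :
    ∑ i ∈ Finset.range (j + 1), (j.choose i : ℚ) * _root_.bernoulli i
      = (-1) ^ j * _root_.bernoulli j := by
  have h := Polynomial.bernoulli_eval_one j
  rw [bernoulli'_eq_bernoulli] at h
  rw [← h, Polynomial.bernoulli, Polynomial.eval_finset_sum]
  refine Finset.sum_congr rfl fun i _ => ?_
  simp [mul_comm]

lemma one_add_X_pow (j : ℕ) :
    ((X : Polynomial ℚ) + 1) ^ j = ∑ k ∈ Finset.range (j + 1), (j.choose k : ℚ) • X ^ k := by
  rw [add_pow]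
  refine Finset.sum_congr rfl fun k _ => ?_
  rw [one_pow, mul_one, smul_eq_C_mul, C_eq_natCast, mul_comm]

lemma Lb_c_pow (j : ℕ) : Lb ((-1 - X : Polynomial ℚ) ^ j) = _root_.bernoulli j := by
  have h1 : (-1 - X : Polynomial ℚ) = -(X + 1) := by ring
  have h2 : ((-1 - X : Polynomial ℚ)) ^ j = ((-1 : ℚ) ^ j) • (X + 1) ^ j := by
    rw [h1, neg_pow]
    simp [smul_eq_C_mul]
  rw [h2, Lb_smul, one_add_X_pow, map_sum]
  simp_rw [Lb_smul, Lb_X_pow]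
  rw [key_bernoulli_sum, ← mul_assoc, ← mul_pow]
  norm_num

lemma Lb_comp (p : Polynomial ℚ) : Lb (p.comp (-1 - X)) = Lb p := by
  induction p using Polynomial.induction_on' with
  | add p q hp hq => rw [add_comp, map_add, map_add, hp, hq]
  | monomial j a =>
      rw [monomial_comp, ← smul_eq_C_mul, Lb_smul, Lb_c_pow, Lb_monomial]

lemma iterate_derivative_comp_c (p : Polynomial ℚ) (k : ℕ) :
    Polynomial.derivative^[k] (p.comp (-1 - X)) =
      (-1) ^ k * (Polynomial.derivative^[k] p).comp (-1 - X) := by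
  induction k generalizing p with
  | zero => simp
  | succ k ih =>
      have hd : Polynomial.derivative (p.comp (-1 - X)) =
          -(Polynomial.derivative p).comp (-1 - X) := by
        rw [derivative_comp]
        simp
      rw [Function.iterate_succ_apply, hd, iterate_derivative_neg, ih,
        Function.iterate_succ_apply, pow_succ]
      ring

end Aux

theorem zekiri_bencherif_identity (n q : ℕ) (hq : Odd q) :
    ∑ k ∈ Finset.range (n + q + 1),
      ((n + q).choose k : ℚ) * ((n + q + k).choose q : ℚ) * bernoulli (n + k) = 0 := by
  classical
  set M := n + q with hM
  -- the symmetric polynomial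
  set g : Polynomial ℚ := (Polynomial.X * (1 + Polynomial.X)) ^ M with hg
  have hgc : g.comp (-1 - Polynomial.X) = g := by
    rw [hg, Polynomial.pow_comp, Polynomial.mul_comp, Polynomial.add_comp, Polynomial.X_comp,
      Polynomial.one_comp]
    ring_nf
  set f : Polynomial ℚ := Polynomial.derivative^[q] g with hf
  -- antisymmetry of f
  have hfc : f.comp (-1 - Polynomial.X) = -f := by
    have h := iterate_derivative_comp_c g q
    rw [hgc, hq.neg_one_pow, neg_one_mul] at h
    have := congrArg Neg.neg h
    rw [neg_neg] at this
    rw [hf, ← this]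
  have hLf : Lb f = 0 := by
    have h1 : Lb (f.comp (-1 - Polynomial.X)) = Lb f := Lb_comp f
    rw [hfc, map_neg] at h1
    linarith
  -- expand g as a sum of monomials
  have hgs : g = ∑ k ∈ Finset.range (M + 1),
      (M.choose k : ℚ) • Polynomial.X ^ (M + k) := by
    rw [hg, mul_pow, mul_comm, show ((1 : Polynomial ℚ) + Polynomial.X) = Polynomial.X + 1 by ring,
      one_add_X_pow, Finset.sum_mul]
    refine Finset.sum_congr rfl fun k _ => ?_
    rw [smul_mul_assoc, ← pow_add, add_comm k M]
  have hfs : f = ∑ k ∈ Finset.range (M + 1),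
      (M.choose k : ℚ) • (((M + k).descFactorial q : ℚ) • Polynomial.X ^ (n + k)) := by
    rw [hf, hgs]
    rw [Polynomial.iterate_derivative_sum]
    refine Finset.sum_congr rfl fun k _ => ?_
    rw [Polynomial.iterate_derivative_smul, Polynomial.iterate_derivative_X_pow_eq_smul]
    have h2 : M + k - q = n + k := by omega
    rw [h2]
  have hLfs : Lb f = (q.factorial : ℚ) * ∑ k ∈ Finset.range (M + 1),
      (M.choose k : ℚ) * ((M + k).choose q : ℚ) * bernoulli (n + k) := by
    rw [hfs, map_sum, Finset.mul_sum]
    refine Finset.sum_congr rfl fun k _ => ?_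
    rw [Lb_smul, Lb_smul, Lb_X_pow, Nat.descFactorial_eq_factorial_mul_choose]
    push_cast
    ring
  rw [hLf] at hLfs
  have hq0 : (q.factorial : ℚ) ≠ 0 := Nat.cast_ne_zero.2 q.factorial_ne_zero
  have := (mul_eq_zero.1 hLfs.symm).resolve_left hq0
  simpa [hM] using this
end
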